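/- (Inserting a point creates only a constant number of new tiles.) Let P ⊆ U be finite and let p ∈ U \ P. Then the number of tiles of QT(P ∪ {p}) that are not tiles of QT(P) is at most 5, and the number of tiles of QT(P) that are not tiles of QT(P ∪ {p}) is at most 1. -/

import Mathlib

/-- The unit square `U = [0,1) × [0,1)`. -/
def unitSq : Set (ℝ × ℝ) := Set.Ico (0 : ℝ) 1 ×ˢ Set.Ico (0 : ℝ) 1

/-- The square `[i/2^k, (i+1)/2^k) × [j/2^k, (j+1)/2^k)`. -/
def canSq (k : ℕ) (i j : ℤ) : Set (ℝ × ℝ) :=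
  Set.Ico ((i : ℝ) / 2 ^ k) (((i : ℝ) + 1) / 2 ^ k) ×ˢ
    Set.Ico ((j : ℝ) / 2 ^ k) (((j : ℝ) + 1) / 2 ^ k)

/-- `σ` is a canonical square of side length `2⁻ᵏ`: it has the form
`[i/2^k, (i+1)/2^k) × [j/2^k, (j+1)/2^k)` with `0 ≤ i, j < 2^k`
(so it is contained in the unit square). -/
def IsCanSqSide (k : ℕ) (σ : Set (ℝ × ℝ)) : Prop :=
  ∃ i j : ℤ, 0 ≤ i ∧ i < 2 ^ k ∧ 0 ≤ j ∧ j < 2 ^ k ∧ σ = canSq k i j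

/-- `σ` is a canonical square. -/
def IsCanSq (σ : Set (ℝ × ℝ)) : Prop := ∃ k : ℕ, IsCanSqSide k σ

/-- `q` is one of the four quadrants of the canonical square `σ`: if `σ` has side
length `2⁻ᵏ`, the quadrants are the canonical squares of side length `2⁻⁽ᵏ⁺¹⁾`
contained in `σ`. -/
def IsQuadrantOf (q σ : Set (ℝ × ℝ)) : Prop :=
  ∃ k : ℕ, IsCanSqSide k σ ∧ IsCanSqSide (k + 1) q ∧ q ⊆ σ

/-- `σ` is the smallest canonical square containing `S`: it is a canonical square,
it contains `S`, and it is contained in every canonical square containing `S`. -/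
def IsSmallestCanSq (S σ : Set (ℝ × ℝ)) : Prop :=
  IsCanSq σ ∧ S ⊆ σ ∧ ∀ τ : Set (ℝ × ℝ), IsCanSq τ → S ⊆ τ → σ ⊆ τ

open scoped Classical

/-- `smallestCanSq S`: the smallest canonical square containing `S` (junk value `∅` if none exists). -/
noncomputable def smallestCanSq (S : Set (ℝ × ℝ)) : Set (ℝ × ℝ) :=
  if h : ∃ σ : Set (ℝ × ℝ), IsSmallestCanSq S σ then h.choose else ∅

/-- A canonical square `σ` is critical for `P` if at least two of its four
quadrants contain a point of `P`. -/
def Critical (P σ : Set (ℝ × ℝ)) : Prop :=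
  IsCanSq σ ∧ ∃ q₁ q₂ : Set (ℝ × ℝ), IsQuadrantOf q₁ σ ∧ IsQuadrantOf q₂ σ ∧
    q₁ ≠ q₂ ∧ (P ∩ q₁).Nonempty ∧ (P ∩ q₂).Nonempty

/-- The tiles of the compressed quadtree map `QT(P)`: (i) `U` itself if `|P| ≤ 1`;
(ii) the annulus `U \ sq(P)` if `|P| ≥ 2` and `sq(P) ≠ U`; (iii) for every
canonical square `σ` critical for `P` and every quadrant `q` of `σ`: the square
`q` if `|P ∩ q| ≤ 1`, and the annulus `q \ sq(P ∩ q)` if `|P ∩ q| ≥ 2` and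
`sq(P ∩ q) ≠ q`. -/
noncomputable def QT (P : Set (ℝ × ℝ)) : Set (Set (ℝ × ℝ)) :=
  {f | (P.ncard ≤ 1 ∧ f = unitSq)
    ∨ (2 ≤ P.ncard ∧ smallestCanSq P ≠ unitSq ∧ f = unitSq \ smallestCanSq P)
    ∨ (∃ σ q : Set (ℝ × ℝ), Critical P σ ∧ IsQuadrantOf q σ ∧
        (((P ∩ q).ncard ≤ 1 ∧ f = q)
          ∨ (2 ≤ (P ∩ q).ncard ∧ smallestCanSq (P ∩ q) ≠ q ∧ f = q \ smallestCanSq (P ∩ q))))}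

/-!
Every tile of `QT(P)` is carried by a *cell*, the unit square or a quadrant of a critical square:
the cell `c` carries `c` or the annulus `c \ sq(P ∩ c)`. Canonical squares through a common
point are nested, and if a cell `c` lies strictly inside a canonical square `c'`, the critical
square of which `c` is a quadrant lies in `c'`, hence in `sq(P ∩ c')`, so `c` misses the tile
of `c'`. Thus the tiles of `QT(P)` are pairwise disjoint.

Inserting `p` leaves every tile not containing `p` in place, so at most one tile disappears.
A new tile is carried either by the cell whose old tile contains `p` (at most one such cell), or
by a quadrant of a square that becomes critical; such a square contains `p` and all of its old
points lie in one quadrant not containing `p`, which forces it to be unique. This gives at most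
`1 + 4` new tiles.
-/

open Set

lemma mem_canSq_iff {k : ℕ} {i j : ℤ} {x : ℝ × ℝ} :
    x ∈ canSq k i j ↔ ⌊x.1 * 2 ^ k⌋ = i ∧ ⌊x.2 * 2 ^ k⌋ = j := by
  have h : (0 : ℝ) < 2 ^ k := by positivity
  simp only [canSq, mem_prod, mem_Ico, div_le_iff₀ h, lt_div_iff₀ h, Int.floor_eq_iff]

lemma floor_mul_two_pow_of_le {m k : ℕ} (hmk : m ≤ k) (a : ℝ) :
    ⌊a * 2 ^ m⌋ = ⌊a * 2 ^ k⌋ / 2 ^ (k - m) := by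
  have h : a * 2 ^ k = a * 2 ^ m * ((2 ^ (k - m) : ℕ) : ℝ) := by
    rw [Nat.cast_pow, Nat.cast_ofNat, mul_assoc, ← pow_add, Nat.add_sub_cancel' hmk]
  rw [h, show (2 : ℤ) ^ (k - m) = ((2 ^ (k - m) : ℕ) : ℤ) by push_cast; rfl,
    ← Int.floor_div_natCast, mul_div_cancel_right₀ _ (by positivity)]

lemma floor_mul_two_pow_succ (a : ℝ) (k : ℕ) :
    ⌊a * 2 ^ (k + 1)⌋ = 2 * ⌊a * 2 ^ k⌋ ∨ ⌊a * 2 ^ (k + 1)⌋ = 2 * ⌊a * 2 ^ k⌋ + 1 := by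
  have h := floor_mul_two_pow_of_le (Nat.le_add_right k 1) a
  rw [Nat.add_sub_cancel_left, pow_one] at h
  omega

lemma canSq_nonempty (k : ℕ) (i j : ℤ) : (canSq k i j).Nonempty :=
  ⟨(i / 2 ^ k, j / 2 ^ k), by simp [mem_canSq_iff]⟩

lemma level_eq_of_canSq_eq {k m : ℕ} {i j i' j' : ℤ} (h : canSq k i j = canSq m i' j') :
    k = m := by
  have hlt : ∀ (n : ℕ) (a : ℤ), (a : ℝ) / 2 ^ n < (a + 1) / 2 ^ n := fun n a =>
    div_lt_div_of_pos_right (lt_add_one _) (by positivity)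
  rw [canSq, canSq, prod_eq_prod_iff_of_nonempty (canSq_nonempty k i j),
    Ico_eq_Ico_iff (Or.inl (hlt k i)), Ico_eq_Ico_iff (Or.inl (hlt k j))] at h
  obtain ⟨⟨h₁, h₂⟩, -⟩ := h
  have hpow : ((2 : ℝ) ^ k)⁻¹ = (2 ^ m)⁻¹ := by linear_combination h₂ - h₁
  exact Nat.pow_right_injective le_rfl (by exact_mod_cast inv_inj.1 hpow)

lemma unitSq_eq_canSq : unitSq = canSq 0 0 0 := by
  simp [unitSq, canSq]

noncomputable def canSqAt (k : ℕ) (x : ℝ × ℝ) : Set (ℝ × ℝ) :=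
  canSq k ⌊x.1 * 2 ^ k⌋ ⌊x.2 * 2 ^ k⌋

lemma mem_canSqAt (k : ℕ) (x : ℝ × ℝ) : x ∈ canSqAt k x :=
  mem_canSq_iff.2 ⟨rfl, rfl⟩

lemma canSqAt_subset_canSqAt {m k : ℕ} (hmk : m ≤ k) (x : ℝ × ℝ) :
    canSqAt k x ⊆ canSqAt m x := by
  intro y hy
  rw [canSqAt, mem_canSq_iff] at hy ⊢
  simp [floor_mul_two_pow_of_le hmk, hy]

lemma isCanSqSide_unitSq : IsCanSqSide 0 unitSq :=
  ⟨0, 0, le_rfl, by norm_num, le_rfl, by norm_num, unitSq_eq_canSq⟩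

lemma isCanSqSide_canSqAt (k : ℕ) {x : ℝ × ℝ} (hx : x ∈ unitSq) :
    IsCanSqSide k (canSqAt k x) := by
  obtain ⟨⟨hx₀, hx₁⟩, ⟨hy₀, hy₁⟩⟩ := hx
  have hk : (0 : ℝ) < 2 ^ k := by positivity
  refine ⟨_, _, ?_, ?_, ?_, ?_, rfl⟩
  all_goals first
    | exact Int.floor_nonneg.2 (by positivity)
    | exact Int.floor_lt.2 (by push_cast; nlinarith)

namespace IsCanSqSide

variable {k m : ℕ} {σ τ : Set (ℝ × ℝ)} {x : ℝ × ℝ}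

lemma eq_canSqAt (hσ : IsCanSqSide k σ) (hx : x ∈ σ) : σ = canSqAt k x := by
  obtain ⟨i, j, -, -, -, -, rfl⟩ := hσ
  obtain ⟨rfl, rfl⟩ := mem_canSq_iff.1 hx
  rfl

lemma nonempty (hσ : IsCanSqSide k σ) : σ.Nonempty := by
  obtain ⟨i, j, -, -, -, -, rfl⟩ := hσ
  exact canSq_nonempty k i j

lemma subset_unitSq (hσ : IsCanSqSide k σ) : σ ⊆ unitSq := by
  obtain ⟨i, j, hi₀, hi, hj₀, hj, rfl⟩ := hσ
  intro y hy
  rw [mem_canSq_iff] at hy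
  rw [unitSq_eq_canSq, mem_canSq_iff]
  simp only [floor_mul_two_pow_of_le (Nat.zero_le k), hy, Nat.sub_zero]
  exact ⟨Int.ediv_eq_zero_of_lt hi₀ hi, Int.ediv_eq_zero_of_lt hj₀ hj⟩

lemma unique (hk : IsCanSqSide k σ) (hm : IsCanSqSide m σ) : k = m := by
  obtain ⟨i, j, -, -, -, -, rfl⟩ := hk
  obtain ⟨i', j', -, -, -, -, h⟩ := hm
  exact level_eq_of_canSq_eq h

lemma subset_of_le (hσ : IsCanSqSide k σ) (hτ : IsCanSqSide m τ) (hmk : m ≤ k)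
    (hxσ : x ∈ σ) (hxτ : x ∈ τ) : σ ⊆ τ := by
  rw [hσ.eq_canSqAt hxσ, hτ.eq_canSqAt hxτ]
  exact canSqAt_subset_canSqAt hmk x

lemma lt_of_ssubset (hσ : IsCanSqSide k σ) (hτ : IsCanSqSide m τ) (hsub : σ ⊆ τ)
    (hne : σ ≠ τ) : m < k := by
  obtain ⟨x, hx⟩ := hσ.nonempty
  by_contra! hkm
  exact hne (hsub.antisymm (hτ.subset_of_le hσ hkm (hsub hx) hx))

end IsCanSqSide

lemma isCanSq_unitSq : IsCanSq unitSq := ⟨0, isCanSqSide_unitSq⟩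

namespace IsCanSq

variable {σ τ : Set (ℝ × ℝ)} {x : ℝ × ℝ}

lemma subset_unitSq (hσ : IsCanSq σ) : σ ⊆ unitSq :=
  hσ.choose_spec.subset_unitSq

lemma nonempty (hσ : IsCanSq σ) : σ.Nonempty :=
  hσ.choose_spec.nonempty

lemma subset_or_subset (hσ : IsCanSq σ) (hτ : IsCanSq τ) (hxσ : x ∈ σ) (hxτ : x ∈ τ) :
    σ ⊆ τ ∨ τ ⊆ σ := by
  obtain ⟨k, hσ⟩ := hσ
  obtain ⟨m, hτ⟩ := hτ
  rcases le_total m k with h | h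
  · exact Or.inl (hσ.subset_of_le hτ h hxσ hxτ)
  · exact Or.inr (hτ.subset_of_le hσ h hxτ hxσ)

end IsCanSq

section Quadrants

variable {q q' σ τ : Set (ℝ × ℝ)} {x : ℝ × ℝ}

lemma IsQuadrantOf.subset (hq : IsQuadrantOf q σ) : q ⊆ σ :=
  hq.choose_spec.2.2

lemma IsQuadrantOf.isCanSq (hq : IsQuadrantOf q σ) : IsCanSq q :=
  ⟨_, hq.choose_spec.2.1⟩

lemma IsQuadrantOf.eq_of_mem (hq : IsQuadrantOf q σ) (hq' : IsQuadrantOf q' σ) (hx : x ∈ q)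
    (hx' : x ∈ q') : q = q' := by
  obtain ⟨k, hσ, hq, -⟩ := hq
  obtain ⟨k', hσ', hq', -⟩ := hq'
  obtain rfl := hσ.unique hσ'
  rw [hq.eq_canSqAt hx, hq'.eq_canSqAt hx']

lemma IsQuadrantOf.subset_of_ssubset (hq : IsQuadrantOf q σ) (hτ : IsCanSq τ) (hsub : q ⊆ τ)
    (hne : q ≠ τ) : σ ⊆ τ := by
  obtain ⟨k, hσ, hqk, hqσ⟩ := hq
  obtain ⟨m, hτ⟩ := hτ
  obtain ⟨x, hx⟩ := hqk.nonempty
  exact hσ.subset_of_le hτ (Nat.lt_succ_iff.1 (hqk.lt_of_ssubset hτ hsub hne)) (hqσ hx) (hsub hx)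

lemma IsCanSqSide.isQuadrantOf_canSqAt {k : ℕ} (hσ : IsCanSqSide k σ) (hx : x ∈ σ) :
    IsQuadrantOf (canSqAt (k + 1) x) σ := by
  have hq := isCanSqSide_canSqAt (k + 1) (hσ.subset_unitSq hx)
  exact ⟨k, hσ, hq, hq.subset_of_le hσ k.le_succ (mem_canSqAt _ x) hx⟩

lemma exists_quadrant_mem (hσ : IsCanSq σ) (hx : x ∈ σ) : ∃ q, IsQuadrantOf q σ ∧ x ∈ q :=
  ⟨_, hσ.choose_spec.isQuadrantOf_canSqAt hx, mem_canSqAt _ x⟩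

lemma exists_quadrant_superset (hσ : IsCanSq σ) (hτ : IsCanSq τ) (hsub : τ ⊆ σ)
    (hne : τ ≠ σ) : ∃ q, IsQuadrantOf q σ ∧ τ ⊆ q := by
  obtain ⟨k, hσ⟩ := hσ
  obtain ⟨m, hτ⟩ := hτ
  obtain ⟨x, hx⟩ := hτ.nonempty
  have hq := isCanSqSide_canSqAt (k + 1) (hσ.subset_unitSq (hsub hx))
  exact ⟨_, hσ.isQuadrantOf_canSqAt (hsub hx),
    hτ.subset_of_le hq (hτ.lt_of_ssubset hσ hsub hne) hx (mem_canSqAt _ x)⟩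

lemma encard_setOf_isQuadrantOf_le (σ : Set (ℝ × ℝ)) : {q | IsQuadrantOf q σ}.encard ≤ 4 := by
  by_cases hσ : IsCanSq σ
  swap
  · rw [show {q | IsQuadrantOf q σ} = ∅ from
      eq_empty_of_forall_notMem fun q hq => hσ ⟨_, hq.choose_spec.1⟩]
    simp
  obtain ⟨k, hσk⟩ := hσ
  obtain ⟨i, j, -, -, -, -, rfl⟩ := id hσk
  let children : Finset (Set (ℝ × ℝ)) :=
    {canSq (k + 1) (2 * i) (2 * j), canSq (k + 1) (2 * i + 1) (2 * j),
      canSq (k + 1) (2 * i) (2 * j + 1), canSq (k + 1) (2 * i + 1) (2 * j + 1)}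
  calc {q | IsQuadrantOf q (canSq k i j)}.encard ≤ (children : Set (Set (ℝ × ℝ))).encard := by
        refine encard_le_encard ?_
        rintro q ⟨k', hσ, ⟨i', j', -, -, -, -, rfl⟩, hsub⟩
        obtain rfl : k' = k := hσ.unique hσk
        obtain ⟨x, hx⟩ := canSq_nonempty (k' + 1) i' j'
        obtain ⟨rfl, rfl⟩ := mem_canSq_iff.1 (hsub hx)
        obtain ⟨rfl, rfl⟩ := mem_canSq_iff.1 hx
        rcases floor_mul_two_pow_succ x.1 k' with h₁ | h₁ <;>
          rcases floor_mul_two_pow_succ x.2 k' with h₂ | h₂ <;> simp [children, h₁, h₂]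
    _ ≤ 4 := by
      rw [encard_coe_eq_coe_finsetCard]
      exact_mod_cast Finset.card_le_four

end Quadrants

section Smallest

variable {S σ : Set (ℝ × ℝ)} {p : ℝ × ℝ}

lemma exists_floor_mul_two_pow_ne {a b : ℝ} (h : a ≠ b) : ∃ k : ℕ, ⌊a * 2 ^ k⌋ ≠ ⌊b * 2 ^ k⌋ := by
  have hab : 0 < |a - b| := abs_pos.2 (sub_ne_zero.2 h)
  obtain ⟨k, hk⟩ := pow_unbounded_of_one_lt (|a - b|⁻¹) (one_lt_two : (1 : ℝ) < 2)
  refine ⟨k, fun he => ?_⟩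
  have h1 := Int.abs_sub_lt_one_of_floor_eq_floor he
  rw [← sub_mul, abs_mul, abs_of_pos (by positivity : (0 : ℝ) < 2 ^ k)] at h1
  rw [inv_lt_iff_one_lt_mul₀ hab] at hk
  linarith

lemma exists_notMem_canSqAt {x y : ℝ × ℝ} (h : x ≠ y) : ∃ k, y ∉ canSqAt k x := by
  simp only [canSqAt, mem_canSq_iff, not_and_or]
  rcases not_and_or.1 (Prod.ext_iff.not.1 h) with h | h
  · obtain ⟨k, hk⟩ := exists_floor_mul_two_pow_ne h
    exact ⟨k, Or.inl (Ne.symm hk)⟩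
  · obtain ⟨k, hk⟩ := exists_floor_mul_two_pow_ne h
    exact ⟨k, Or.inr (Ne.symm hk)⟩

lemma exists_isSmallestCanSq (hSU : S ⊆ unitSq) (hS : S.Nontrivial) :
    ∃ σ, IsSmallestCanSq S σ := by
  obtain ⟨x, hx, y, hy, hxy⟩ := hS
  obtain ⟨n, hn⟩ := exists_notMem_canSqAt hxy
  set K := {k | S ⊆ canSqAt k x}
  have hK : BddAbove K := ⟨n, fun k hk =>
    not_lt.1 fun hnk => hn (canSqAt_subset_canSqAt hnk.le x (hk hy))⟩
  have h0 : 0 ∈ K := by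
    show S ⊆ canSqAt 0 x
    rwa [← isCanSqSide_unitSq.eq_canSqAt (hSU hx)]
  refine ⟨canSqAt (sSup K) x, ⟨_, isCanSqSide_canSqAt _ (hSU hx)⟩, Nat.sSup_mem ⟨0, h0⟩ hK, ?_⟩
  rintro τ ⟨m, hτ⟩ hSτ
  obtain rfl := hτ.eq_canSqAt (hSτ hx)
  exact canSqAt_subset_canSqAt (le_csSup hK hSτ) x

lemma IsSmallestCanSq.smallestCanSq_eq (h : IsSmallestCanSq S σ) : smallestCanSq S = σ := by
  have hex : ∃ σ, IsSmallestCanSq S σ := ⟨σ, h⟩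
  have h' : IsSmallestCanSq S (smallestCanSq S) := by
    rw [smallestCanSq, dif_pos hex]
    exact hex.choose_spec
  exact (h'.2.2 σ h.1 h.2.1).antisymm (h.2.2 _ h'.1 h'.2.1)

lemma isSmallestCanSq_smallestCanSq (hSU : S ⊆ unitSq) (hS : S.Nontrivial) :
    IsSmallestCanSq S (smallestCanSq S) :=
  let ⟨_, h⟩ := exists_isSmallestCanSq hSU hS
  h.smallestCanSq_eq ▸ h

lemma smallestCanSq_insert_of_mem (hSU : S ⊆ unitSq) (hS : S.Nontrivial)
    (hp : p ∈ smallestCanSq S) : smallestCanSq (insert p S) = smallestCanSq S := by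
  obtain ⟨hσ, hSσ, hmin⟩ := isSmallestCanSq_smallestCanSq hSU hS
  exact IsSmallestCanSq.smallestCanSq_eq
    ⟨hσ, insert_subset hp hSσ, fun τ hτ h => hmin τ hτ ((subset_insert p S).trans h)⟩

end Smallest

section Critical

variable {S T q σ τ : Set (ℝ × ℝ)}

lemma Critical.mono (h : Critical S σ) (hST : S ⊆ T) : Critical T σ :=
  let ⟨hσ, q₁, q₂, hq₁, hq₂, hne, h₁, h₂⟩ := h
  ⟨hσ, q₁, q₂, hq₁, hq₂, hne, h₁.mono (inter_subset_inter_left _ hST),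
    h₂.mono (inter_subset_inter_left _ hST)⟩

lemma Critical.inter_of_subset (h : Critical S σ) (hστ : σ ⊆ τ) : Critical (S ∩ τ) σ := by
  obtain ⟨hσ, q₁, q₂, hq₁, hq₂, hne, ⟨x, hxS, hx⟩, ⟨y, hyS, hy⟩⟩ := h
  exact ⟨hσ, q₁, q₂, hq₁, hq₂, hne, ⟨x, ⟨hxS, hστ (hq₁.subset hx)⟩, hx⟩,
    ⟨y, ⟨hyS, hστ (hq₂.subset hy)⟩, hy⟩⟩

lemma Critical.nontrivial (h : Critical S σ) : (S ∩ σ).Nontrivial := by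
  obtain ⟨-, q₁, q₂, hq₁, hq₂, hne, ⟨x, hxS, hx⟩, ⟨y, hyS, hy⟩⟩ := h
  exact ⟨x, ⟨hxS, hq₁.subset hx⟩, y, ⟨hyS, hq₂.subset hy⟩,
    fun e => hne (hq₁.eq_of_mem hq₂ hx (e ▸ hy))⟩

lemma not_critical_of_inter_subset (hq : IsQuadrantOf q σ) (h : S ∩ σ ⊆ q) :
    ¬Critical S σ := by
  rintro ⟨-, q₁, q₂, hq₁, hq₂, hne, ⟨x, hxS, hx⟩, ⟨y, hyS, hy⟩⟩
  exact hne ((hq₁.eq_of_mem hq hx (h ⟨hxS, hq₁.subset hx⟩)).trans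
    (hq.eq_of_mem hq₂ (h ⟨hyS, hq₂.subset hy⟩) hy))

lemma exists_quadrant_inter_subset_of_not_critical (hσ : IsCanSq σ) (h : ¬Critical S σ) :
    ∃ q, IsQuadrantOf q σ ∧ S ∩ σ ⊆ q := by
  by_cases hS : (S ∩ σ).Nonempty
  · obtain ⟨x, hxS, hxσ⟩ := hS
    obtain ⟨q, hq, hxq⟩ := exists_quadrant_mem hσ hxσ
    refine ⟨q, hq, fun y ⟨hyS, hyσ⟩ => by_contra fun hyq => ?_⟩
    obtain ⟨q', hq', hyq'⟩ := exists_quadrant_mem hσ hyσ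
    exact h ⟨hσ, q, q', hq, hq', fun e => hyq (e ▸ hyq'), ⟨x, hxS, hxq⟩, ⟨y, hyS, hyq'⟩⟩
  · obtain ⟨q, hq, -⟩ := exists_quadrant_mem hσ hσ.nonempty.some_mem
    exact ⟨q, hq, fun y hy => absurd ⟨y, hy⟩ hS⟩

lemma Critical.subset_smallestCanSq (h : Critical S σ) (hSU : S ⊆ unitSq) :
    σ ⊆ smallestCanSq S := by
  obtain ⟨hs, hSs, -⟩ := isSmallestCanSq_smallestCanSq hSU (h.nontrivial.mono inter_subset_left)
  obtain ⟨x, ⟨hxS, hxσ⟩, -⟩ := h.nontrivial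
  rcases h.1.subset_or_subset hs hxσ (hSs hxS) with hσs | hsσ
  · exact hσs
  by_contra hσs
  obtain ⟨q, hq, hsq⟩ := exists_quadrant_superset h.1 hs hsσ fun e => hσs e.ge
  exact not_critical_of_inter_subset hq (fun z hz => hsq (hSs hz.1)) h

end Critical

section Tiles

def cells (P : Set (ℝ × ℝ)) : Set (Set (ℝ × ℝ)) :=
  insert unitSq {q | ∃ σ, Critical P σ ∧ IsQuadrantOf q σ}

noncomputable def tileAt (P c : Set (ℝ × ℝ)) : Set (ℝ × ℝ) :=
  if (P ∩ c).ncard ≤ 1 then c else c \ smallestCanSq (P ∩ c)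

variable {P c c' : Set (ℝ × ℝ)} {p x : ℝ × ℝ}

lemma isCanSq_of_mem_cells (hc : c ∈ cells P) : IsCanSq c := by
  obtain rfl | ⟨σ, -, hq⟩ := hc
  exacts [isCanSq_unitSq, hq.isCanSq]

lemma cells_mono {Q : Set (ℝ × ℝ)} (hPQ : P ⊆ Q) : cells P ⊆ cells Q :=
  insert_subset_insert fun _ ⟨σ, hσ, hq⟩ => ⟨σ, hσ.mono hPQ, hq⟩

lemma tileAt_subset : tileAt P c ⊆ c := by
  unfold tileAt
  split_ifs
  exacts [subset_rfl, sdiff_subset]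

lemma nonempty_and_tileAt_eq_iff (hPU : P ⊆ unitSq) (hc : IsCanSq c) {t : Set (ℝ × ℝ)} :
    (t.Nonempty ∧ tileAt P c = t) ↔
      ((P ∩ c).ncard ≤ 1 ∧ t = c) ∨
        (2 ≤ (P ∩ c).ncard ∧ smallestCanSq (P ∩ c) ≠ c ∧ t = c \ smallestCanSq (P ∩ c)) := by
  by_cases h : (P ∩ c).ncard ≤ 1
  · rw [tileAt, if_pos h]
    simp only [h, true_and, show ¬2 ≤ (P ∩ c).ncard by omega, false_and, or_false]
    exact ⟨fun ⟨_, ht⟩ => ht.symm, fun ht => ⟨ht ▸ hc.nonempty, ht.symm⟩⟩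
  obtain ⟨hnt, -⟩ := one_lt_ncard_iff_nontrivial_and_finite.1 (not_le.1 h)
  have hsc : smallestCanSq (P ∩ c) ⊆ c :=
    (isSmallestCanSq_smallestCanSq (inter_subset_left.trans hPU) hnt).2.2 c hc inter_subset_right
  rw [tileAt, if_neg h]
  simp only [h, false_and, false_or, show 2 ≤ (P ∩ c).ncard by omega, true_and]
  constructor
  · rintro ⟨⟨z, hz⟩, rfl⟩
    exact ⟨fun e => hz.2 (by rw [e]; exact hz.1), rfl⟩
  · rintro ⟨hne, rfl⟩
    exact ⟨sdiff_nonempty.2 fun hcs => hne (hsc.antisymm hcs), rfl⟩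

lemma mem_QT_iff (hPU : P ⊆ unitSq) {t : Set (ℝ × ℝ)} :
    t ∈ QT P ↔ t.Nonempty ∧ ∃ c ∈ cells P, tileAt P c = t := by
  have hroot := nonempty_and_tileAt_eq_iff hPU isCanSq_unitSq (t := t)
  rw [inter_eq_left.2 hPU] at hroot
  rw [QT, mem_ofPred_eq, cells, exists_mem_insert, and_or_left, hroot, or_assoc]
  refine or_congr_right (or_congr_right ⟨?_, ?_⟩)
  · rintro ⟨σ, c, hσ, hq, h⟩
    obtain ⟨ht, rfl⟩ := (nonempty_and_tileAt_eq_iff hPU hq.isCanSq).2 h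
    exact ⟨ht, c, ⟨σ, hσ, hq⟩, rfl⟩
  · rintro ⟨ht, c, ⟨σ, hσ, hq⟩, rfl⟩
    exact ⟨σ, c, hσ, hq, (nonempty_and_tileAt_eq_iff hPU hq.isCanSq).1 ⟨ht, rfl⟩⟩

lemma notMem_tileAt_of_ssubset (hfin : P.Finite) (hPU : P ⊆ unitSq) (hc : c ∈ cells P)
    (hc' : IsCanSq c') (hsub : c ⊆ c') (hne : c ≠ c') (hx : x ∈ c) : x ∉ tileAt P c' := by
  obtain rfl | ⟨σ, hσ, hq⟩ := hc
  · exact absurd (hsub.antisymm hc'.subset_unitSq) hne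
  have hcrit : Critical (P ∩ c') σ := hσ.inter_of_subset (hq.subset_of_ssubset hc' hsub hne)
  have h2 : ¬(P ∩ c').ncard ≤ 1 :=
    not_le.2 ((one_lt_ncard_iff_nontrivial_and_finite.2
      ⟨hcrit.nontrivial.mono inter_subset_left, hfin.inter_of_left c'⟩))
  rw [tileAt, if_neg h2]
  exact fun hx' => hx'.2 (hcrit.subset_smallestCanSq (inter_subset_left.trans hPU) (hq.subset hx))

lemma eq_of_mem_tileAt (hfin : P.Finite) (hPU : P ⊆ unitSq) (hc : c ∈ cells P)
    (hc' : c' ∈ cells P) (hx : x ∈ tileAt P c) (hx' : x ∈ tileAt P c') : c = c' := by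
  by_contra hne
  rcases (isCanSq_of_mem_cells hc).subset_or_subset (isCanSq_of_mem_cells hc')
    (tileAt_subset hx) (tileAt_subset hx') with h | h
  · exact notMem_tileAt_of_ssubset hfin hPU hc (isCanSq_of_mem_cells hc') h hne
      (tileAt_subset hx) hx'
  · exact notMem_tileAt_of_ssubset hfin hPU hc' (isCanSq_of_mem_cells hc) h (Ne.symm hne)
      (tileAt_subset hx') hx

lemma subsingleton_setOf_mem_QT (hfin : P.Finite) (hPU : P ⊆ unitSq) (x : ℝ × ℝ) :
    {t | t ∈ QT P ∧ x ∈ t}.Subsingleton := by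
  rintro t ⟨ht, hxt⟩ t' ⟨ht', hxt'⟩
  obtain ⟨-, c, hc, rfl⟩ := (mem_QT_iff hPU).1 ht
  obtain ⟨-, c', hc', rfl⟩ := (mem_QT_iff hPU).1 ht'
  rw [eq_of_mem_tileAt hfin hPU hc hc' hxt hxt']

lemma tileAt_insert_of_notMem (hfin : P.Finite) (hPU : P ⊆ unitSq) (hp : p ∉ tileAt P c) :
    tileAt (insert p P) c = tileAt P c := by
  by_cases hpc : p ∈ c
  swap
  · rw [tileAt, tileAt, insert_inter_of_notMem hpc]
  have h2 : ¬(P ∩ c).ncard ≤ 1 := fun h => hp (by rwa [tileAt, if_pos h])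
  rw [tileAt, if_neg h2, mem_sdiff, not_and, not_not] at hp
  have h2' : ¬(insert p P ∩ c).ncard ≤ 1 := fun h => h2 <| (ncard_le_ncard
    (inter_subset_inter_left c (subset_insert p P)) ((hfin.insert p).inter_of_left c)).trans h
  obtain ⟨hnt, -⟩ := one_lt_ncard_iff_nontrivial_and_finite.1 (not_le.1 h2)
  rw [tileAt, tileAt, if_neg h2, if_neg h2', insert_inter_of_mem hpc,
    smallestCanSq_insert_of_mem (inter_subset_left.trans hPU) hnt (hp hpc)]

end Tiles

section Insertion

variable {P σ : Set (ℝ × ℝ)} {p : ℝ × ℝ}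

lemma QT_diff_QT_insert_subset (hfin : P.Finite) (hPU : P ⊆ unitSq) (hpU : p ∈ unitSq) :
    QT P \ QT (insert p P) ⊆ {t | t ∈ QT P ∧ p ∈ t} := by
  rintro t ⟨ht, hnt⟩
  refine ⟨ht, by_contra fun hpt => hnt ?_⟩
  obtain ⟨hne, c, hc, rfl⟩ := (mem_QT_iff hPU).1 ht
  exact (mem_QT_iff (insert_subset hpU hPU)).2
    ⟨hne, c, cells_mono (subset_insert p P) hc, tileAt_insert_of_notMem hfin hPU hpt⟩

lemma QT_insert_diff_QT_subset (hfin : P.Finite) (hPU : P ⊆ unitSq) (hpU : p ∈ unitSq) :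
    QT (insert p P) \ QT P ⊆
      tileAt (insert p P) '' {c | c ∈ cells P ∧ p ∈ tileAt P c} ∪
        tileAt (insert p P) ''
          {q | ∃ σ ∈ {σ | Critical (insert p P) σ ∧ ¬Critical P σ}, IsQuadrantOf q σ} := by
  rintro t ⟨ht, hnt⟩
  obtain ⟨hne, c, hc, rfl⟩ := (mem_QT_iff (insert_subset hpU hPU)).1 ht
  by_cases hcP : c ∈ cells P
  · refine Or.inl ⟨c, ⟨hcP, by_contra fun hp => hnt ?_⟩, rfl⟩
    rw [tileAt_insert_of_notMem hfin hPU hp] at hne ⊢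
    exact (mem_QT_iff hPU).2 ⟨hne, c, hcP, rfl⟩
  · obtain rfl | ⟨σ, hσ, hq⟩ := hc
    · exact absurd (mem_insert _ _) hcP
    · exact Or.inr ⟨c, ⟨σ, ⟨hσ, fun h => hcP (Or.inr ⟨σ, h, hq⟩)⟩, hq⟩, rfl⟩

lemma exists_quadrant_of_critical_insert (h : Critical (insert p P) σ) (h' : ¬Critical P σ) :
    ∃ q, IsQuadrantOf q σ ∧ P ∩ σ ⊆ q ∧ p ∈ σ \ q ∧ (P ∩ σ).Nonempty := by
  obtain ⟨q, hq, hPq⟩ := exists_quadrant_inter_subset_of_not_critical h.1 h'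
  have hp : p ∈ σ \ q := by
    refine by_contra fun hp => not_critical_of_inter_subset hq ?_ h
    rintro x ⟨rfl | hxP, hxσ⟩
    · exact not_not.1 fun hxq => hp ⟨hxσ, hxq⟩
    · exact hPq ⟨hxP, hxσ⟩
  refine ⟨q, hq, hPq, hp, by_contra fun hP => ?_⟩
  obtain ⟨q', hq', hpq'⟩ := exists_quadrant_mem h.1 hp.1
  refine not_critical_of_inter_subset hq' ?_ h
  rintro x ⟨rfl | hxP, hxσ⟩
  · exact hpq'
  · exact absurd ⟨x, hxP, hxσ⟩ hP

lemma subsingleton_setOf_critical_insert :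
    {σ | Critical (insert p P) σ ∧ ¬Critical P σ}.Subsingleton := by
  have key : ∀ σ σ', Critical (insert p P) σ → ¬Critical P σ → Critical (insert p P) σ' →
      ¬Critical P σ' → σ' ⊆ σ → σ' = σ := by
    intro σ σ' hQ hP hQ' hP' hsub
    by_contra hne
    obtain ⟨q, hq, hPq, hp, -⟩ := exists_quadrant_of_critical_insert hQ hP
    obtain ⟨_, -, -, hp', y, hyP, hyσ'⟩ := exists_quadrant_of_critical_insert hQ' hP'
    obtain ⟨q₀, hq₀, hσ'q₀⟩ := exists_quadrant_superset hQ.1 hQ'.1 hsub hne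
    obtain rfl := hq₀.eq_of_mem hq (hσ'q₀ hyσ') (hPq ⟨hyP, hsub hyσ'⟩)
    exact hp.2 (hσ'q₀ hp'.1)
  rintro σ ⟨hQ, hP⟩ σ' ⟨hQ', hP'⟩
  obtain ⟨_, -, -, hp, -⟩ := exists_quadrant_of_critical_insert hQ hP
  obtain ⟨_, -, -, hp', -⟩ := exists_quadrant_of_critical_insert hQ' hP'
  rcases hQ.1.subset_or_subset hQ'.1 hp.1 hp'.1 with h | h
  · exact key σ' σ hQ' hP' hQ hP h
  · exact (key σ σ' hQ hP hQ' hP' h).symm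

lemma encard_setOf_isQuadrantOf_mem_le {N : Set (Set (ℝ × ℝ))} (hN : N.Subsingleton) :
    {q | ∃ σ ∈ N, IsQuadrantOf q σ}.encard ≤ 4 := by
  rcases hN.eq_empty_or_singleton with rfl | ⟨σ, rfl⟩
  · simp
  · simpa using encard_setOf_isQuadrantOf_le σ

end Insertion

/-- Inserting a point creates only a constant number of new tiles: at most `5`
tiles of `QT(P ∪ {p})` are not tiles of `QT(P)`, and at most `1` tile of `QT(P)`
is not a tile of `QT(P ∪ {p})`. -/
theorem QT_insert_few_changes (P : Set (ℝ × ℝ)) (hfin : P.Finite)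
    (hPU : P ⊆ unitSq) (p : ℝ × ℝ) (hp : p ∈ unitSq \ P) :
    (QT (P ∪ {p}) \ QT P).ncard ≤ 5 ∧ (QT P \ QT (P ∪ {p})).ncard ≤ 1 := by
  rw [union_singleton]
  have hcell : {c | c ∈ cells P ∧ p ∈ tileAt P c}.encard ≤ 1 :=
    encard_le_one_iff.2 fun c c' hc hc' => eq_of_mem_tileAt hfin hPU hc.1 hc'.1 hc.2 hc'.2
  have hquad :=
    encard_setOf_isQuadrantOf_mem_le (subsingleton_setOf_critical_insert (P := P) (p := p))
  refine ⟨(encard_le_coe_iff_finite_ncard_le.1 ?_).2, (encard_le_coe_iff_finite_ncard_le.1 ?_).2⟩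
  · calc (QT (insert p P) \ QT P).encard
        ≤ _ := encard_le_encard (QT_insert_diff_QT_subset hfin hPU hp.1)
      _ ≤ _ := encard_union_le _ _
      _ ≤ 1 + 4 :=
        add_le_add ((encard_image_le _ _).trans hcell) ((encard_image_le _ _).trans hquad)
  · exact (encard_le_encard (QT_diff_QT_insert_subset hfin hPU hp.1)).trans
      (encard_le_one_iff_subsingleton.2 (subsingleton_setOf_mem_QT hfin hPU p))
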